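/- Let α be a real number with 0 ≤ α < 2/3 and let n ≥ 25 be an integer. Then λ_α(K_3 ∨ (K_{n−6} ∪ 3K_1)) < n − 2. -/

import Mathlib

open SimpleGraph

/-- The `Aα`-matrix of a finite simple graph: `Aα(G) = α·D(G) + (1-α)·A(G)`. -/
noncomputable def aAlphaMatrix {V : Type*} [Finite V] (α : ℝ) (G : SimpleGraph V) :
    Matrix V V ℝ :=
  letI := Fintype.ofFinite V
  letI := Classical.decEq V
  letI : DecidableRel G.Adj := Classical.decRel _
  α • Matrix.diagonal (fun v => (G.degree v : ℝ)) + (1 - α) • (G.adjMatrix ℝ)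

/-- The `Aα`-spectral radius: the largest eigenvalue of `Aα(G)` (the supremum of its real
spectrum; all eigenvalues of this symmetric matrix are real). -/
noncomputable def lambdaAlpha {V : Type*} [Finite V] (α : ℝ) (G : SimpleGraph V) : ℝ :=
  letI := Fintype.ofFinite V
  letI := Classical.decEq V
  sSup (spectrum ℝ (aAlphaMatrix α G))

/-- The join `G ∨ H` of two graphs on disjoint vertex sets. -/
def graphJoin {V W : Type*} (G : SimpleGraph V) (H : SimpleGraph W) : SimpleGraph (V ⊕ W) where
  Adj x y :=
    match x, y with
    | Sum.inl a, Sum.inl b => G.Adj a b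
    | Sum.inr a, Sum.inr b => H.Adj a b
    | Sum.inl _, Sum.inr _ => True
    | Sum.inr _, Sum.inl _ => True
  symm := ⟨by
    rintro (a | a) (b | b) h
    · exact G.adj_symm h
    · trivial
    · trivial
    · exact H.adj_symm h⟩
  loopless := ⟨by
    rintro (a | a) h
    · exact G.irrefl h
    · exact H.irrefl h⟩

/-- `G` has an `H`-factor where `H` consists of the paths `P_k` for `k ∈ ks`: a spanning
subgraph all of whose connected components are paths `P_k` with `k ∈ ks`. -/
def HasPathFactor {V : Type*} (G : SimpleGraph V) (ks : Set ℕ) : Prop :=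
  ∃ F : SimpleGraph V, F ≤ G ∧
    ∀ c : F.ConnectedComponent, ∃ k ∈ ks, Nonempty ((F.induce c.supp) ≃g pathGraph k)

/-- `K_1 ∨ (K_{n-2} ∪ K_1)`. -/
def specialGraph (n : ℕ) : SimpleGraph (Fin 1 ⊕ (Fin (n - 2) ⊕ Fin 1)) :=
  graphJoin (⊤ : SimpleGraph (Fin 1))
    ((⊤ : SimpleGraph (Fin (n - 2))) ⊕g (⊤ : SimpleGraph (Fin 1)))

/-!
A nonnegative matrix `M` with a positive vector `w` such that `M w ≤ c w` entrywise has all its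
real eigenvalues in `[-c, c]`: compare an eigenvector `x` with `w` at a coordinate where `|x| / w`
is largest. For `K_3 ∨ (K_m ∪ 3K_1)` the weights `1`, `7/10`, `1/6` on the three vertex classes
give `A_α w ≤ (m + 7/2) w` as soon as `0 ≤ α ≤ 2/3` and `m ≥ 15`; with `m = n - 6` this is
`λ_α ≤ n - 5/2 < n - 2`.
-/

namespace Matrix

variable {V : Type*} [Fintype V] [DecidableEq V] {M : Matrix V V ℝ} {w : V → ℝ} {c : ℝ}

theorem abs_le_of_mem_spectrum_of_mulVec_le (hM : ∀ i j, 0 ≤ M i j) (hw : ∀ v, 0 < w v)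
    (hMw : ∀ v, (M *ᵥ w) v ≤ c * w v) {μ : ℝ} (hμ : μ ∈ spectrum ℝ M) :
    |μ| ≤ c := by
  rw [← spectrum_toLin', ← Module.End.hasEigenvalue_iff_mem_spectrum] at hμ
  obtain ⟨x, hx⟩ := hμ.exists_hasEigenvector
  have hMx : M *ᵥ x = μ • x := by simpa using hx.apply_eq_smul
  have := hμ.nonempty
  obtain ⟨v, -, hv⟩ := Finset.exists_max_image Finset.univ (fun u => |x u| / w u)
    Finset.univ_nonempty
  set t := |x v| / w v with ht
  have hx_le (u : V) : |x u| ≤ t * w u := (div_le_iff₀ (hw u)).mp (hv u (Finset.mem_univ u))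
  have hxv : 0 < |x v| := by
    obtain ⟨u, hu⟩ := Function.ne_iff.mp hx.2
    have : 0 < t := (div_pos (abs_pos.mpr hu) (hw u)).trans_le (hv u (Finset.mem_univ u))
    rw [ht] at this
    exact (div_pos_iff_of_pos_right (hw v)).mp this
  refine le_of_mul_le_mul_right ?_ hxv
  calc |μ| * |x v| = |∑ u, M v u * x u| := by
        rw [← abs_mul, ← smul_eq_mul, ← Pi.smul_apply, ← hMx]; rfl
    _ ≤ ∑ u, M v u * (t * w u) := by
        refine (Finset.abs_sum_le_sum_abs _ _).trans (Finset.sum_le_sum fun u _ => ?_)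
        rw [abs_mul, abs_of_nonneg (hM v u)]
        exact mul_le_mul_of_nonneg_left (hx_le u) (hM v u)
    _ = t * (M *ᵥ w) v := by
        simp only [mulVec, dotProduct, Finset.mul_sum]
        exact Finset.sum_congr rfl fun u _ => by ring
    _ ≤ t * (c * w v) := mul_le_mul_of_nonneg_left (hMw v) (div_nonneg hxv.le (hw v).le)
    _ = c * |x v| := by rw [ht]; field_simp [(hw v).ne']

theorem sSup_spectrum_le_of_mulVec_le (hM : ∀ i j, 0 ≤ M i j) (hw : ∀ v, 0 < w v)
    (hMw : ∀ v, (M *ᵥ w) v ≤ c * w v) (hc : 0 ≤ c) : sSup (spectrum ℝ M) ≤ c :=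
  Real.sSup_le (fun _ hμ => (le_abs_self _).trans
    (abs_le_of_mem_spectrum_of_mulVec_le hM hw hMw hμ)) hc

end Matrix

section aAlpha

open Matrix

variable {V : Type*} [Fintype V] (α : ℝ) (G : SimpleGraph V) [DecidableRel G.Adj]

theorem aAlphaMatrix_apply [DecidableEq V] (v u : V) :
    aAlphaMatrix α G v u =
      (if v = u then α * G.degree v else 0) + if G.Adj v u then 1 - α else 0 := by
  simp only [aAlphaMatrix, Matrix.add_apply, Matrix.smul_apply, diagonal_apply, adjMatrix_apply,
    smul_eq_mul, mul_ite, mul_zero, mul_one]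
  congr!

theorem aAlphaMatrix_mulVec_apply (w : V → ℝ) (v : V) :
    (aAlphaMatrix α G *ᵥ w) v = ∑ u, if G.Adj v u then α * w v + (1 - α) * w u else 0 := by
  classical
  simp only [mulVec, dotProduct, aAlphaMatrix_apply, add_mul, ite_mul, zero_mul,
    Finset.sum_add_distrib, Finset.sum_ite_eq, Finset.mem_univ, if_true, ← Finset.sum_filter,
    ← neighborFinset_eq_filter, Finset.sum_const, card_neighborFinset_eq_degree, nsmul_eq_mul]
  ring

end aAlpha

theorem lambdaAlpha_le_of_sum_adj_le {V : Type*} [Fintype V] {α : ℝ} (hα0 : 0 ≤ α)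
    (hα1 : α ≤ 1) (G : SimpleGraph V) [DecidableRel G.Adj] {w : V → ℝ} (hw : ∀ v, 0 < w v)
    {c : ℝ} (hc : 0 ≤ c)
    (hrow : ∀ v, (∑ u, if G.Adj v u then α * w v + (1 - α) * w u else 0) ≤ c * w v) :
    lambdaAlpha α G ≤ c := by
  classical
  -- `lambdaAlpha` is built on `Fintype.ofFinite V`; `convert` below matches it with `‹Fintype V›`
  let _ : Fintype V := Fintype.ofFinite V
  refine Matrix.sSup_spectrum_le_of_mulVec_le (fun v u => ?_) hw (fun v => ?_) hc
  · rw [aAlphaMatrix_apply]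
    have := mul_nonneg hα0 (Nat.cast_nonneg (G.degree v))
    split_ifs <;> linarith
  · rw [aAlphaMatrix_mulVec_apply]
    convert hrow v

section graphJoin

variable {V W : Type*} {G : SimpleGraph V} {H : SimpleGraph W}

@[simp] theorem graphJoin_adj_inl_inl {a b : V} :
    (graphJoin G H).Adj (.inl a) (.inl b) ↔ G.Adj a b := .rfl

@[simp] theorem graphJoin_adj_inr_inr {a b : W} :
    (graphJoin G H).Adj (.inr a) (.inr b) ↔ H.Adj a b := .rfl

@[simp] theorem graphJoin_adj_inl_inr {a : V} {b : W} :
    (graphJoin G H).Adj (.inl a) (.inr b) := trivial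

@[simp] theorem graphJoin_adj_inr_inl {a : V} {b : W} :
    (graphJoin G H).Adj (.inr b) (.inl a) := trivial

instance [DecidableRel G.Adj] [DecidableRel H.Adj] : DecidableRel (G ⊕g H).Adj
  | .inl _, .inl _ => decidable_of_iff' _ sum_adj_inl
  | .inr _, .inr _ => decidable_of_iff' _ sum_adj_inr
  | .inl _, .inr _ => .isFalse (by simp)
  | .inr _, .inl _ => .isFalse (by simp)

instance [DecidableRel G.Adj] [DecidableRel H.Adj] : DecidableRel (graphJoin G H).Adj
  | .inl a, .inl b => inferInstanceAs (Decidable (G.Adj a b))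
  | .inr a, .inr b => inferInstanceAs (Decidable (H.Adj a b))
  | .inl _, .inr _ => .isTrue trivial
  | .inr _, .inl _ => .isTrue trivial

end graphJoin

theorem Fintype.sum_ite_eq_zero_else {ι R : Type*} [Fintype ι] [DecidableEq ι] [Ring R] (a : ι)
    (k : R) : (∑ x, if a = x then 0 else k) = ((Fintype.card ι : R) - 1) * k := by
  rw [Finset.sum_ite, Finset.sum_const_zero, zero_add, Finset.sum_const, Finset.filter_ne,
    Finset.card_erase_of_mem (Finset.mem_univ a), Finset.card_univ, nsmul_eq_mul,
    Nat.cast_pred (Fintype.card_pos_iff.mpr ⟨a⟩)]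

theorem lambdaAlpha_K3_join_le {α : ℝ} (hα0 : 0 ≤ α) (hα1 : α ≤ 2 / 3) {m : ℕ}
    (hm : 15 ≤ m) :
    lambdaAlpha α (graphJoin (⊤ : SimpleGraph (Fin 3))
        ((⊤ : SimpleGraph (Fin m)) ⊕g (⊥ : SimpleGraph (Fin 3)))) ≤ m + 7 / 2 := by
  have hm' : (15 : ℝ) ≤ m := by exact_mod_cast hm
  refine lambdaAlpha_le_of_sum_adj_le hα0 (by linarith) _
    (w := Sum.elim (fun _ => 1) (Sum.elim (fun _ => 7 / 10) (fun _ => 1 / 6)))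
    (by rintro (_ | _ | _) <;> norm_num) (by positivity) ?_
  rintro (a | b | c) <;>
    simp [Fintype.sum_sum_type, Fintype.sum_ite_eq_zero_else] <;>
    nlinarith [mul_nonneg (sub_nonneg.mpr hα1) (sub_nonneg.mpr hm')]

/-- For `0 ≤ α < 2/3` and every integer `n ≥ 25`, `λ_α(K_3 ∨ (K_{n−6} ∪ 3K_1)) < n − 2`. -/
theorem lambdaAlpha_K3_join_lt (α : ℝ) (hα0 : 0 ≤ α) (hα1 : α < 2 / 3)
    (n : ℕ) (hn : 25 ≤ n) :
    lambdaAlpha α (graphJoin (⊤ : SimpleGraph (Fin 3))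
        ((⊤ : SimpleGraph (Fin (n - 6))) ⊕g (⊥ : SimpleGraph (Fin 3)))) <
      (n : ℝ) - 2 := by
  have h := lambdaAlpha_K3_join_le hα0 hα1.le (by omega : 15 ≤ n - 6)
  rw [Nat.cast_sub (by omega : 6 ≤ n)] at h
  linarith
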